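/- Let G be an undirected social network with w_{ii} = 0 for all buyers i, and suppose G is bipartite with bipartition (A, V ∖ A), i.e., w_{ij} = 0 whenever i, j ∈ A or i, j ∈ V ∖ A. Then the Influence-and-Exploit strategy IE(A, 1/2) extracts the maximum revenue of G: R_IE(A, 1/2) = R_max(G) = W/4. -/

import Mathlib

open Finset

/-- The revenue of a marketing strategy `(π, p)` on an undirected social network. -/
noncomputable def revenue {V : Type*} [Fintype V] [DecidableEq V]
    (w : V → V → ℝ) (π : V ≃ Fin (Fintype.card V)) (p : V → ℝ) : ℝ :=
  ∑ i, p i * (1 - p i) *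
    (w i i + ∑ j ∈ univ.filter (fun j => π j < π i), p j * w j i)

/-- The maximum revenue of an undirected social network. -/
noncomputable def maxRev {V : Type*} [Fintype V] [DecidableEq V]
    (w : V → V → ℝ) : ℝ :=
  sSup {r | ∃ (π : V ≃ Fin (Fintype.card V)) (p : V → ℝ),
    (∀ i, 1/2 ≤ p i ∧ p i ≤ 1) ∧ r = revenue w π p}

/-- The expected revenue of the Influence-and-Exploit strategy `IE(A, p)`. -/
noncomputable def ieRev {V : Type*} [Fintype V] [DecidableEq V]
    (w : V → V → ℝ) (A : Finset V) (p : ℝ) : ℝ :=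
  p * (1 - p) * ∑ i ∈ Aᶜ,
    (w i i + ∑ j ∈ A, w j i + (p / 2) * ∑ j ∈ Aᶜ \ {i}, w j i)

/-- `W`: total edge weight (each unordered pair counted once). -/
noncomputable def totalEdge {V : Type*} [Fintype V] [DecidableEq V]
    (w : V → V → ℝ) : ℝ :=
  (∑ i, ∑ j ∈ ({i} : Finset V)ᶜ, w i j) / 2

/-!
Since `p (1 - p) ≤ 1/4` and `p j ≤ 1`, any strategy earns at most
`(1/4) ∑ᵢ ∑_{π j < π i} w j i`, and for symmetric weights with zero diagonal this double sum
counts every edge once, at its later endpoint: it equals `W`. In a bipartite network every edge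
joins `A` to its complement, so `W` is the cut weight. Both `IE(A, 1/2)` and the strategy that
first sells to `A` at price probability `1` (earning nothing but making every member of `A` an
influencer) and then to the rest at `1/2` earn exactly a quarter of the cut weight.
-/

section DoubleCounting

variable {V α : Type*} [Fintype V] [DecidableEq V] [LinearOrder α]

theorem two_mul_totalEdge {w : V → V → ℝ} (hself : ∀ i, w i i = 0) :
    2 * totalEdge w = ∑ i, ∑ j, w i j := by
  rw [totalEdge, mul_div_cancel₀ _ two_ne_zero]
  refine sum_congr rfl fun i _ => ?_
  rw [← sum_add_sum_compl {i}, sum_singleton, hself, zero_add]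

theorem sum_sum_filter_lt_eq_totalEdge {w : V → V → ℝ} (hsymm : ∀ i j, w i j = w j i)
    (hself : ∀ i, w i i = 0) {π : V → α} (hπ : Function.Injective π) :
    ∑ i, ∑ j with π j < π i, w j i = totalEdge w := by
  set earlier : V → V → ℝ := fun i j => if π j < π i then w j i else 0
  have hsplit : ∀ i j, w j i = earlier i j + earlier j i := by
    intro i j
    rcases lt_trichotomy (π j) (π i) with h | h | h
    · simp [earlier, h, h.not_gt]
    · simp [earlier, hπ h, hself]
    · simp [earlier, h, h.not_gt, hsymm]
  have htwice : 2 * totalEdge w = 2 * ∑ i, ∑ j, earlier i j := by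
    calc 2 * totalEdge w = ∑ i, ∑ j, w j i := by rw [two_mul_totalEdge hself, sum_comm]
      _ = ∑ i, ∑ j, earlier i j + ∑ i, ∑ j, earlier j i := by
        simp only [hsplit, sum_add_distrib]
      _ = 2 * ∑ i, ∑ j, earlier i j := by rw [sum_comm (f := fun i j => earlier j i)]; ring
  simp only [sum_filter]
  linarith

end DoubleCounting

section Revenue

variable {V : Type*} [Fintype V] [DecidableEq V]

theorem revenue_le_totalEdge_div_four {w : V → V → ℝ} (hsymm : ∀ i j, w i j = w j i)
    (hnonneg : ∀ i j, 0 ≤ w i j) (hself : ∀ i, w i i = 0) (π : V ≃ Fin (Fintype.card V))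
    {p : V → ℝ} (hp₀ : ∀ i, 0 ≤ p i) (hp₁ : ∀ i, p i ≤ 1) :
    revenue w π p ≤ totalEdge w / 4 := by
  calc revenue w π p ≤ ∑ i, 1 / 4 * ∑ j with π j < π i, w j i := by
        refine sum_le_sum fun i _ => ?_
        rw [hself, zero_add]
        refine mul_le_mul ?_ ?_ ?_ (by norm_num)
        · nlinarith [sq_nonneg (p i - 1 / 2)]
        · exact sum_le_sum fun j _ => mul_le_of_le_one_left (hnonneg j i) (hp₁ j)
        · exact sum_nonneg fun j _ => mul_nonneg (hp₀ j) (hnonneg j i)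
    _ = totalEdge w / 4 := by
        rw [← mul_sum, sum_sum_filter_lt_eq_totalEdge hsymm hself π.injective]
        ring

theorem maxRev_eq_of_isGreatest {w : V → V → ℝ} {r : ℝ}
    (hle : ∀ π (p : V → ℝ), (∀ i, 1 / 2 ≤ p i ∧ p i ≤ 1) → revenue w π p ≤ r)
    (hattain : ∃ π p, (∀ i, 1 / 2 ≤ p i ∧ p i ≤ 1) ∧ revenue w π p = r) :
    maxRev w = r := by
  obtain ⟨π, p, hp, hr⟩ := hattain
  refine IsGreatest.csSup_eq ⟨⟨π, p, hp, hr.symm⟩, ?_⟩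
  rintro _ ⟨π', p', hp', rfl⟩
  exact hle π' p' hp'

noncomputable def influenceFirstOrder (A : Finset V) : V ≃ Fin (Fintype.card V) :=
  ((Equiv.sumCompl (· ∈ A)).symm.trans
    (A.equivFin.sumCongr
      ((Equiv.subtypeEquivRight fun _ => mem_compl.symm).trans Aᶜ.equivFin))).trans
    (finSumFinEquiv.trans (finCongr (card_add_card_compl A)))

theorem influenceFirstOrder_lt {A : Finset V} {i j : V} (hj : j ∈ A) (hi : i ∉ A) :
    influenceFirstOrder A j < influenceFirstOrder A i := by
  have hj' : (influenceFirstOrder A j : ℕ) < #A := by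
    simp [influenceFirstOrder, Equiv.sumCompl_symm_apply_of_pos (p := (· ∈ A)) hj]
  have hi' : #A ≤ (influenceFirstOrder A i : ℕ) := by
    simp [influenceFirstOrder, Equiv.sumCompl_symm_apply_of_neg (p := (· ∈ A)) hi]
  exact Fin.lt_def.mpr (hj'.trans_le hi')

end Revenue

section Bipartite

variable {V : Type*} [Fintype V] [DecidableEq V] {w : V → V → ℝ} {A : Finset V}

noncomputable def crossWeight (w : V → V → ℝ) (A : Finset V) : ℝ :=
  ∑ i ∈ Aᶜ, ∑ j ∈ A, w j i

theorem totalEdge_eq_crossWeight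
    (hbip : ∀ i j, ((i ∈ A ∧ j ∈ A) ∨ (i ∉ A ∧ j ∉ A)) → w i j = 0)
    (hsymm : ∀ i j, w i j = w j i) (hself : ∀ i, w i i = 0) :
    totalEdge w = crossWeight w A := by
  have hA : ∀ i ∈ A, ∑ j, w i j = ∑ j ∈ Aᶜ, w i j := fun i hi => by
    rw [← sum_add_sum_compl A, sum_eq_zero fun j hj => hbip i j (.inl ⟨hi, hj⟩), zero_add]
  have hAc : ∀ i ∈ Aᶜ, ∑ j, w i j = ∑ j ∈ A, w j i := fun i hi => by
    rw [← sum_add_sum_compl A,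
      sum_eq_zero fun j hj => hbip i j (.inr ⟨mem_compl.1 hi, mem_compl.1 hj⟩), add_zero]
    exact sum_congr rfl fun j _ => hsymm i j
  have : 2 * totalEdge w = 2 * crossWeight w A := by
    rw [two_mul_totalEdge hself, ← sum_add_sum_compl A, sum_congr rfl hA, sum_congr rfl hAc,
      sum_comm, crossWeight]
    ring
  linarith

theorem ieRev_half_eq_crossWeight
    (hbip : ∀ i j, ((i ∈ A ∧ j ∈ A) ∨ (i ∉ A ∧ j ∉ A)) → w i j = 0)
    (hself : ∀ i, w i i = 0) :
    ieRev w A (1 / 2) = crossWeight w A / 4 := by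
  have hAc : ∀ i ∈ Aᶜ, ∑ j ∈ Aᶜ \ {i}, w j i = 0 := fun i hi =>
    sum_eq_zero fun j hj =>
      hbip j i (.inr ⟨mem_compl.1 (mem_sdiff.1 hj).1, mem_compl.1 hi⟩)
  rw [ieRev, crossWeight, sum_congr rfl fun i hi => by rw [hself, hAc i hi]]
  ring_nf

theorem revenue_influenceFirstOrder
    (hbip : ∀ i j, ((i ∈ A ∧ j ∈ A) ∨ (i ∉ A ∧ j ∉ A)) → w i j = 0)
    (hself : ∀ i, w i i = 0) :
    revenue w (influenceFirstOrder A) (fun i => if i ∈ A then 1 else 1 / 2) =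
      crossWeight w A / 4 := by
  set p : V → ℝ := fun i => if i ∈ A then 1 else 1 / 2
  have hinfl : ∀ i ∉ A,
      ∑ j with influenceFirstOrder A j < influenceFirstOrder A i, p j * w j i =
        ∑ j ∈ A, w j i := by
    intro i hi
    have hsub : A ⊆ ({j | influenceFirstOrder A j < influenceFirstOrder A i} : Finset V) :=
      fun j hj => mem_filter.2 ⟨mem_univ j, influenceFirstOrder_lt hj hi⟩
    rw [← sum_subset hsub fun j _ hj => by rw [hbip j i (.inr ⟨hj, hi⟩), mul_zero]]
    exact sum_congr rfl fun j hj => by simp [p, hj]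
  rw [revenue, ← sum_add_sum_compl A, crossWeight, sum_div,
    sum_eq_zero fun i hi => by simp [p, hi], zero_add]
  refine sum_congr rfl fun i hi => ?_
  rw [hself, hinfl i (mem_compl.1 hi)]
  simp only [p, if_neg (mem_compl.1 hi)]
  ring

end Bipartite

/-- For an undirected bipartite social network with zero self-weights and bipartition
`(A, V ∖ A)`, the strategy `IE(A, 1/2)` extracts the maximum revenue, which is `W/4`. -/
theorem bipartite_IE_optimal
    {V : Type*} [Fintype V] [DecidableEq V] (w : V → V → ℝ)
    (hsymm : ∀ i j, w i j = w j i) (hnonneg : ∀ i j, 0 ≤ w i j)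
    (hself : ∀ i, w i i = 0) (A : Finset V)
    (hbip : ∀ i j, ((i ∈ A ∧ j ∈ A) ∨ (i ∉ A ∧ j ∉ A)) → w i j = 0) :
    ieRev w A (1/2) = maxRev w ∧ maxRev w = totalEdge w / 4 := by
  have hcross : totalEdge w = crossWeight w A := totalEdge_eq_crossWeight hbip hsymm hself
  have hmax : maxRev w = totalEdge w / 4 := by
    refine maxRev_eq_of_isGreatest (fun π p hp => ?_)
      ⟨influenceFirstOrder A, fun i => if i ∈ A then 1 else 1 / 2, fun i => ?_, ?_⟩
    · exact revenue_le_totalEdge_div_four hsymm hnonneg hself π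
        (fun i => by linarith [(hp i).1]) (fun i => (hp i).2)
    · dsimp only
      split_ifs <;> norm_num
    · rw [revenue_influenceFirstOrder hbip hself, hcross]
  rw [hmax, ieRev_half_eq_crossWeight hbip hself, hcross]
  exact ⟨rfl, rfl⟩
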